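/- arXiv:1911.12010 — 2 statements merged into one kernel-verified Lean document; each statement's English description precedes it below -/
import Mathlib

section
/- Let n be a positive integer and let 𝒮 and 𝒜 be linear differential operators on ℝⁿ with time-independent smooth coefficients, all of whose derivatives are bounded (so both map the Schwartz space 𝒮(ℝⁿ) into itself), such that 𝒮 is symmetric ((𝒮f,g) = (f,𝒮g) for all Schwartz f, g) and 𝒜 is anti-symmetric ((𝒜f,g) = −(f,𝒜g) for all Schwartz f, g) with respect to the L² inner product. Then for every g ∈ C^∞([0,1]; 𝒮(ℝⁿ)) with g(t) ≠ 0 for all t ∈ [0,1], and every t ∈ (0,1): ∂_t [ (𝒮g(t), g(t)) / ‖g(t)‖² ] ≥ [ (𝒮g(t), 𝒜g(t)) + (𝒜g(t), 𝒮g(t)) − (1/2)‖∂_t g(t) − 𝒜g(t) − 𝒮g(t)‖² ] / ‖g(t)‖². -/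
/-!
Transport everything to `L²` through the embedding of Schwartz space, viewing `L²(ℝⁿ; ℂ)` as a
real inner product space, where `Re (f, g) = ⟪f, g⟫`. By the symmetry of `𝒮`, the Rayleigh
quotient `r = ⟪𝒮g, g⟫ / ‖g‖²` has derivative `2 ⟪d, ∂ₜg⟫ / ‖g‖²`, where `d = 𝒮g - r g` is the
component of `𝒮g` orthogonal to `g`. Write `∂ₜg = w + 𝒜g + 𝒮g`. Antisymmetry gives
`⟪g, 𝒜g⟫ = 0`, so `⟪d, 𝒜g⟫ = ⟪𝒮g, 𝒜g⟫`, and `⟪d, 𝒮g⟫ = ‖d‖²`. Hence the two sides of the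
inequality differ by `‖2d + w‖² / (2‖g‖²) ≥ 0`.
-/

open MeasureTheory Set Filter Topology

noncomputable section

/-- The `L²(ℝⁿ)` inner product `(f, g) = ∫ f conj(g)` of two functions. -/
def L2pair {n : ℕ} (f g : EuclideanSpace ℝ (Fin n) → ℂ) : ℂ :=
  ∫ x, f x * (starRingEnd ℂ) (g x)

open scoped RealInnerProductSpace

theorem ContinuousLinearMap.hasDerivAt_comp_of_tendsto_slope {E F : Type*} [AddCommGroup E]
    [Module ℝ E] [TopologicalSpace E] [NormedAddCommGroup F] [NormedSpace ℝ F] (T : E →L[ℝ] F)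
    {g : ℝ → E} {g' : E} {t : ℝ}
    (h : Tendsto (fun h : ℝ => h⁻¹ • (g (t + h) - g t)) (𝓝[≠] 0) (𝓝 g')) :
    HasDerivAt (fun s => T (g s)) (T g') t := by
  rw [hasDerivAt_iff_tendsto_slope_zero]
  simpa only [Function.comp_def, map_sub, map_smul] using (T.continuous.tendsto g').comp h

section RayleighQuotient

variable {H : Type*} [NormedAddCommGroup H] [InnerProductSpace ℝ H]

theorem HasDerivAt.inner_div_norm_sq {u s : ℝ → H} {u' s' : H} {t : ℝ}
    (hu : HasDerivAt u u' t) (hs : HasDerivAt s s' t) (hsym : ⟪s', u t⟫ = ⟪s t, u'⟫)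
    (h0 : u t ≠ 0) :
    HasDerivAt (fun τ => ⟪s τ, u τ⟫ / ‖u τ‖ ^ 2)
      (2 * ⟪s t - (⟪s t, u t⟫ / ‖u t‖ ^ 2) • u t, u'⟫ / ‖u t‖ ^ 2) t := by
  have hN : ‖u t‖ ^ 2 ≠ 0 := by positivity
  refine ((hs.inner ℝ hu).div hu.norm_sq hN).congr_deriv ?_
  rw [inner_sub_left, real_inner_smul_left, hsym]
  field_simp
  ring

theorem le_two_inner_sub_div_norm_sq {u s a v : H} (hu : u ≠ 0) (hua : ⟪u, a⟫ = 0) :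
    (2 * ⟪s, a⟫ - 1 / 2 * ‖v - a - s‖ ^ 2) / ‖u‖ ^ 2
      ≤ 2 * ⟪s - (⟪s, u⟫ / ‖u‖ ^ 2) • u, v⟫ / ‖u‖ ^ 2 := by
  have hN : 0 < ‖u‖ ^ 2 := by positivity
  set d := s - (⟪s, u⟫ / ‖u‖ ^ 2) • u
  have hdu : ⟪d, u⟫ = 0 := by
    rw [inner_sub_left, real_inner_smul_left, real_inner_self_eq_norm_sq]
    field_simp
    ring
  have hda : ⟪d, a⟫ = ⟪s, a⟫ := by
    rw [inner_sub_left, real_inner_smul_left, real_inner_comm, hua]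
    ring
  have hds : ⟪d, s⟫ = ‖d‖ ^ 2 := by
    rw [← real_inner_self_eq_norm_sq]
    nth_rw 1 [show s = d + (⟪s, u⟫ / ‖u‖ ^ 2) • u by simp [d]]
    rw [inner_add_right, real_inner_smul_right, hdu]
    ring
  obtain ⟨w, rfl⟩ : ∃ w, v = w + a + s := ⟨v - a - s, by abel⟩
  have hw : w + a + s - a - s = w := by abel
  have hsq : ‖(2 : ℝ) • d + w‖ ^ 2 = 4 * ‖d‖ ^ 2 + 4 * ⟪d, w⟫ + ‖w‖ ^ 2 := by
    rw [norm_add_sq_real, norm_smul, real_inner_smul_left]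
    norm_num
    ring
  rw [hw]
  apply div_le_div_of_nonneg_right _ hN.le
  rw [inner_add_right, inner_add_right, hda, hds]
  nlinarith [sq_nonneg ‖(2 : ℝ) • d + w‖]

end RayleighQuotient

section SchwartzToL2

variable {E F : Type*} [NormedAddCommGroup E] [NormedSpace ℝ E] [NormedAddCommGroup F]
  [NormedSpace ℝ F] [MeasurableSpace E] [BorelSpace E] [SecondCountableTopologyEither E F]

theorem SchwartzMap.toLp_sub (f g : SchwartzMap E F) (p : ENNReal) (μ : Measure E)
    [μ.HasTemperateGrowth] : (f - g).toLp p μ = f.toLp p μ - g.toLp p μ :=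
  (f.memLp p μ).toLp_sub (g.memLp p μ)

theorem SchwartzMap.norm_toLp_two_sq (f : SchwartzMap E F) (μ : Measure E)
    [μ.HasTemperateGrowth] : ‖f.toLp 2 μ‖ ^ 2 = ∫ x, ‖f x‖ ^ 2 ∂μ := by
  rw [SchwartzMap.norm_toLp' two_ne_zero ENNReal.ofNat_ne_top]
  simp only [ENNReal.toReal_ofNat, Real.rpow_ofNat]
  exact_mod_cast Real.rpow_inv_natCast_pow (integral_nonneg fun _ => by positivity) two_ne_zero

theorem SchwartzMap.toLp_ne_zero {f : SchwartzMap E F} (hf : f ≠ 0) (p : ENNReal) (μ : Measure E)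
    [μ.HasTemperateGrowth] [μ.IsOpenPosMeasure] : f.toLp p μ ≠ 0 := by
  rw [← MemLp.toLp_zero ((0 : SchwartzMap E F).memLp p μ)]
  exact (SchwartzMap.injective_toLp p μ).ne hf

end SchwartzToL2

theorem MeasureTheory.L2.real_inner_eq_re_inner {α : Type*} [MeasurableSpace α]
    {μ : Measure α} (f g : Lp ℂ 2 μ) : ⟪f, g⟫ = (inner ℂ f g).re := by
  rw [L2.inner_def, L2.inner_def]
  exact integral_re (L2.integrable_inner (𝕜 := ℂ) f g)

theorem re_L2pair_eq_inner {n : ℕ} (f g : SchwartzMap (EuclideanSpace ℝ (Fin n)) ℂ) :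
    (L2pair f g).re = ⟪f.toLp 2, g.toLp 2⟫ := by
  rw [real_inner_comm, L2.real_inner_eq_re_inner, SchwartzMap.inner_toL2_toL2_eq g f volume,
    L2pair]
  simp

theorem inner_toLp_eq_zero_of_L2pair_eq_neg {n : ℕ}
    {f h : SchwartzMap (EuclideanSpace ℝ (Fin n)) ℂ} (hfh : L2pair h f = -L2pair f h) :
    ⟪f.toLp 2, h.toLp 2⟫ = 0 := by
  have hre := congrArg Complex.re hfh
  rw [Complex.neg_re, re_L2pair_eq_inner, re_L2pair_eq_inner, real_inner_comm] at hre
  linarith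

theorem abstract_log_convexity_lemma_general
    (n : ℕ)
    (S A : SchwartzMap (EuclideanSpace ℝ (Fin n)) ℂ →L[ℂ]
      SchwartzMap (EuclideanSpace ℝ (Fin n)) ℂ)
    (hS : ∀ f g : SchwartzMap (EuclideanSpace ℝ (Fin n)) ℂ,
      L2pair (⇑(S f)) (⇑g) = L2pair (⇑f) (⇑(S g)))
    (hA : ∀ f g : SchwartzMap (EuclideanSpace ℝ (Fin n)) ℂ,
      L2pair (⇑(A f)) (⇑g) = -L2pair (⇑f) (⇑(A g)))
    (dg : ℕ → ℝ → SchwartzMap (EuclideanSpace ℝ (Fin n)) ℂ)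
    (hderiv : ∀ (j : ℕ) (t : ℝ),
      Tendsto (fun h : ℝ => h⁻¹ • (dg j (t + h) - dg j t)) (𝓝[≠] 0) (𝓝 (dg (j + 1) t)))
    (g : ℝ → SchwartzMap (EuclideanSpace ℝ (Fin n)) ℂ) (hg : dg 0 = g)
    (hne : ∀ t ∈ Icc (0:ℝ) 1, g t ≠ 0) :
    ∀ t ∈ Ioo (0:ℝ) 1,
      deriv (fun s =>
          (L2pair (⇑(S (g s))) (⇑(g s))).re / (∫ x, ‖g s x‖ ^ 2)) t
        ≥ ((L2pair (⇑(S (g t))) (⇑(A (g t))) + L2pair (⇑(A (g t))) (⇑(S (g t)))).re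
            - (1 / 2) * ∫ x, ‖dg 1 t x - A (g t) x - S (g t) x‖ ^ 2)
          / (∫ x, ‖g t x‖ ^ 2) := by
  subst hg
  intro t ht
  have hu : HasDerivAt (fun τ => (dg 0 τ).toLp 2) ((dg 1 t).toLp 2) t :=
    (SchwartzMap.toLpCLM ℝ ℂ 2 volume).hasDerivAt_comp_of_tendsto_slope (hderiv 0 t)
  have hs : HasDerivAt (fun τ => (S (dg 0 τ)).toLp 2) ((S (dg 1 t)).toLp 2) t :=
    ((SchwartzMap.toLpCLM ℝ ℂ 2 volume).comp (S.restrictScalars ℝ)).hasDerivAt_comp_of_tendsto_slope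
      (hderiv 0 t)
  have hsym (f g) : ⟪(S f).toLp 2, g.toLp 2⟫ = ⟪(S g).toLp 2, f.toLp 2⟫ := by
    rw [← re_L2pair_eq_inner, hS, re_L2pair_eq_inner, real_inner_comm]
  have hu0 : (dg 0 t).toLp 2 ≠ 0 :=
    SchwartzMap.toLp_ne_zero (hne t (Ioo_subset_Icc_self ht)) 2 volume
  have hdefect : ∫ x, ‖dg 1 t x - A (dg 0 t) x - S (dg 0 t) x‖ ^ 2
      = ‖(dg 1 t).toLp 2 volume - (A (dg 0 t)).toLp 2 volume - (S (dg 0 t)).toLp 2 volume‖ ^ 2 := by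
    rw [← SchwartzMap.toLp_sub _ _ 2 volume, ← SchwartzMap.toLp_sub _ _ 2 volume,
      SchwartzMap.norm_toLp_two_sq]
    rfl
  simp only [re_L2pair_eq_inner, ← SchwartzMap.norm_toLp_two_sq, Complex.add_re, hdefect]
  rw [(hu.inner_div_norm_sq hs (hsym _ _) hu0).deriv,
    real_inner_comm ((S (dg 0 t)).toLp 2 volume) ((A (dg 0 t)).toLp 2 volume), ← two_mul]
  exact le_two_inner_sub_div_norm_sq hu0 (inner_toLp_eq_zero_of_L2pair_eq_neg (hA _ _))

/-- **Abstract logarithmic convexity lemma** (Lemma 2.3).  Let `𝒮` and `𝒜` be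
(time-independent, continuous) linear operators on Schwartz space — such as differential
operators with smooth bounded coefficients — with `𝒮` symmetric and `𝒜` anti-symmetric
for the `L²(ℝⁿ)` inner product.  Then for every `g ∈ C^∞([0,1]; 𝒮(ℝⁿ))` (encoded by the
family `dg` of time derivatives of all orders, taken in the topology of Schwartz space,
with `dg 0 = g`) that never vanishes on `[0,1]`, and every `t ∈ (0,1)`,
`∂_t[(𝒮g,g)/‖g‖²] ≥ [(𝒮g,𝒜g) + (𝒜g,𝒮g) − ½‖∂_t g − 𝒜g − 𝒮g‖²]/‖g‖²`. -/
theorem abstract_log_convexity_lemma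
    (n : ℕ) (hn : 0 < n)
    (S A : SchwartzMap (EuclideanSpace ℝ (Fin n)) ℂ →L[ℂ]
      SchwartzMap (EuclideanSpace ℝ (Fin n)) ℂ)
    (hS : ∀ f g : SchwartzMap (EuclideanSpace ℝ (Fin n)) ℂ,
      L2pair (⇑(S f)) (⇑g) = L2pair (⇑f) (⇑(S g)))
    (hA : ∀ f g : SchwartzMap (EuclideanSpace ℝ (Fin n)) ℂ,
      L2pair (⇑(A f)) (⇑g) = -L2pair (⇑f) (⇑(A g)))
    (dg : ℕ → ℝ → SchwartzMap (EuclideanSpace ℝ (Fin n)) ℂ)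
    (hcont : ∀ j : ℕ, Continuous (dg j))
    (hderiv : ∀ (j : ℕ) (t : ℝ),
      Tendsto (fun h : ℝ => h⁻¹ • (dg j (t + h) - dg j t)) (𝓝[≠] 0) (𝓝 (dg (j + 1) t)))
    (g : ℝ → SchwartzMap (EuclideanSpace ℝ (Fin n)) ℂ) (hg : dg 0 = g)
    (hne : ∀ t ∈ Icc (0:ℝ) 1, g t ≠ 0) :
    ∀ t ∈ Ioo (0:ℝ) 1,
      deriv (fun s =>
          (L2pair (⇑(S (g s))) (⇑(g s))).re / (∫ x, ‖g s x‖ ^ 2)) t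
        ≥ ((L2pair (⇑(S (g t))) (⇑(A (g t))) + L2pair (⇑(A (g t))) (⇑(S (g t)))).re
            - (1 / 2) * ∫ x, ‖dg 1 t x - A (g t) x - S (g t) x‖ ^ 2)
          / (∫ x, ‖g t x‖ ^ 2) :=
  abstract_log_convexity_lemma_general n S A hS hA dg hderiv g hg hne
end
end

section
/- Let n be a positive integer, p > 1, and b, γ > 0. Set a = γ / (1 + (2γ/b)^{1/(p−1)})^{p−1}. Then for all x, y ∈ ℝⁿ: a|x|^p − b|x−y|^p − γ|y|^p ≤ −(b/2)|x−y|^p. -/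
/-!
Write `x = (x - y) + y` and split it as the convex combination
`α⁻¹ • (α • (x - y)) + β⁻¹ • (β • y)` with `α⁻¹ + β⁻¹ = 1`. Convexity of `r ↦ r ^ p` gives
`‖x‖ ^ p ≤ α ^ (p - 1) ‖x - y‖ ^ p + β ^ (p - 1) ‖y‖ ^ p`, and with `t = (2γ/b) ^ (1/(p-1))`,
`α = (1 + t)/t`, `β = 1 + t` the constant `a` is exactly the one for which
`a α ^ (p - 1) = b/2` and `a β ^ (p - 1) = γ`.
-/

theorem Real.add_rpow_le_of_inv_add_inv_eq_one {p α β s u : ℝ} (hp : 1 ≤ p) (hα : 0 < α)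
    (hβ : 0 < β) (hαβ : α⁻¹ + β⁻¹ = 1) (hs : 0 ≤ s) (hu : 0 ≤ u) :
    (s + u) ^ p ≤ α ^ (p - 1) * s ^ p + β ^ (p - 1) * u ^ p := by
  have hconv := (convexOn_rpow hp).2 (Set.mem_Ici.2 (mul_nonneg hα.le hs))
    (Set.mem_Ici.2 (mul_nonneg hβ.le hu)) (inv_nonneg.2 hα.le) (inv_nonneg.2 hβ.le) hαβ
  simp only [smul_eq_mul, inv_mul_cancel_left₀ hα.ne', inv_mul_cancel_left₀ hβ.ne',
    Real.mul_rpow hα.le hs, Real.mul_rpow hβ.le hu] at hconv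
  calc (s + u) ^ p ≤ α⁻¹ * (α ^ p * s ^ p) + β⁻¹ * (β ^ p * u ^ p) := hconv
    _ = α ^ (p - 1) * s ^ p + β ^ (p - 1) * u ^ p := by
      rw [Real.rpow_sub_one hα.ne', Real.rpow_sub_one hβ.ne']
      ring

theorem norm_add_rpow_le_of_inv_add_inv_eq_one {E : Type*} [SeminormedAddCommGroup E]
    {p α β : ℝ} (x y : E) (hp : 1 ≤ p) (hα : 0 < α) (hβ : 0 < β) (hαβ : α⁻¹ + β⁻¹ = 1) :
    ‖x + y‖ ^ p ≤ α ^ (p - 1) * ‖x‖ ^ p + β ^ (p - 1) * ‖y‖ ^ p :=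
  (Real.rpow_le_rpow (norm_nonneg _) (norm_add_le x y) (by linarith)).trans
    (Real.add_rpow_le_of_inv_add_inv_eq_one hp hα hβ hαβ (norm_nonneg x) (norm_nonneg y))

theorem weight_transfer_convexity_inequality_general
    (n : ℕ) (p b γ : ℝ) (hp : 1 < p) (hb : 0 < b) (hγ : 0 < γ)
    (a : ℝ) (ha : a = γ / (1 + (2 * γ / b) ^ (1 / (p - 1))) ^ (p - 1)) :
    ∀ x y : EuclideanSpace ℝ (Fin n),
      a * ‖x‖ ^ p - b * ‖x - y‖ ^ p - γ * ‖y‖ ^ p ≤ -(b / 2) * ‖x - y‖ ^ p := by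
  intro x y
  set t : ℝ := (2 * γ / b) ^ (1 / (p - 1)) with ht_def
  have ht : 0 < t := by positivity
  have ht_rpow : t ^ (p - 1) = 2 * γ / b := by
    rw [ht_def, ← Real.rpow_mul (by positivity), one_div_mul_cancel (by linarith),
      Real.rpow_one]
  have hsplit := norm_add_rpow_le_of_inv_add_inv_eq_one (x - y) y hp.le
    (α := (1 + t) / t) (β := 1 + t) (by positivity) (by positivity) (by field_simp; ring)
  rw [sub_add_cancel] at hsplit
  have hα : a * ((1 + t) / t) ^ (p - 1) = b / 2 := by
    rw [Real.div_rpow (by positivity) ht.le, ht_rpow, ha]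
    field_simp
  have hβ : a * (1 + t) ^ (p - 1) = γ := by
    rw [ha]
    field_simp
  have hmul := mul_le_mul_of_nonneg_left hsplit (show 0 ≤ a by rw [ha]; positivity)
  rw [mul_add, ← mul_assoc, ← mul_assoc, hα, hβ] at hmul
  linarith

/-- **Convexity inequality for superexponential weights** (key pointwise estimate in
Lemma 2.1).  Let `n ≥ 1`, `p > 1` and `b, γ > 0`, and set
`a = γ / (1 + (2γ/b)^{1/(p−1)})^{p−1}`.  Then for all `x, y ∈ ℝⁿ`,
`a|x|^p − b|x−y|^p − γ|y|^p ≤ −(b/2)|x−y|^p`. -/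
theorem weight_transfer_convexity_inequality
    (n : ℕ) (hn : 0 < n) (p b γ : ℝ) (hp : 1 < p) (hb : 0 < b) (hγ : 0 < γ)
    (a : ℝ) (ha : a = γ / (1 + (2 * γ / b) ^ (1 / (p - 1))) ^ (p - 1)) :
    ∀ x y : EuclideanSpace ℝ (Fin n),
      a * ‖x‖ ^ p - b * ‖x - y‖ ^ p - γ * ‖y‖ ^ p ≤ -(b / 2) * ‖x - y‖ ^ p :=
  weight_transfer_convexity_inequality_general n p b γ hp hb hγ a ha
end
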